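/- arXiv:2308.00467 — 6 statements merged into one kernel-verified Lean document; each statement's English description precedes it below -/
import Mathlib

section
/- Let a, c ∈ ℝⁿ be nonzero and linearly independent, let b_a, b_c ∈ ℝ, and let x ∈ ℝⁿ satisfy ⟨c, x⟩ = b_c (the previous hyperplane constraint). Define β = ⟨a, c⟩(⟨a, x⟩ − b_a) / (‖a‖²‖c‖² − ⟨a, c⟩²), w = x + β c, and x⁺ = w − ((⟨a, w⟩ − b_a)/‖a‖²) a. Then ⟨c, x⁺⟩ = b_c, i.e., the multi-step inertial Kaczmarz update preserves the previous hyperplane constraint. -/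
open RealInnerProductSpace

/-- The multi-step inertial Kaczmarz update preserves the previous hyperplane
constraint `⟨c, ·⟩ = b_c`. -/
theorem stmt_2 {n : ℕ} (a c : EuclideanSpace ℝ (Fin n)) (ha : a ≠ 0) (hc : c ≠ 0)
    (hind : LinearIndependent ℝ ![a, c]) (ba bc : ℝ)
    (x : EuclideanSpace ℝ (Fin n)) (hx : ⟪c, x⟫ = bc) :
    let β : ℝ := ⟪a, c⟫ * (⟪a, x⟫ - ba) / (‖a‖ ^ 2 * ‖c‖ ^ 2 - ⟪a, c⟫ ^ 2)
    let w := x + β • c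
    ⟪c, w - ((⟪a, w⟫ - ba) / ‖a‖ ^ 2) • a⟫ = bc := by
  intro β w
  have hD : ⟪a, c⟫ ^ 2 < ‖a‖ ^ 2 * ‖c‖ ^ 2 := by
    have h1 : ⟪a, c⟫ < ‖a‖ * ‖c‖ := by
      rw [inner_lt_norm_mul_iff_real]
      intro h
      have := linearIndependent_fin2.mp hind
      exact this.2 (‖a‖ / ‖c‖) (by
        have hcn : ‖c‖ ≠ 0 := norm_ne_zero_iff.mpr hc
        have h2 : a = (‖a‖ / ‖c‖) • c := by
          have := congrArg (fun v => (‖c‖)⁻¹ • v) h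
          simpa [smul_smul, inv_mul_cancel₀ hcn, div_eq_inv_mul, mul_comm] using this
        simpa [Matrix.cons_val_zero, Matrix.cons_val_one] using h2.symm)
    have h2 : -⟪a, c⟫ < ‖a‖ * ‖c‖ := by
      have : ⟪-a, c⟫ < ‖-a‖ * ‖c‖ := by
        rw [inner_lt_norm_mul_iff_real]
        intro h
        have := linearIndependent_fin2.mp hind
        exact this.2 (-(‖a‖ / ‖c‖)) (by
          have hcn : ‖c‖ ≠ 0 := norm_ne_zero_iff.mpr hc
          have h' : ‖c‖ • a = -(‖a‖ • c) := by
            have := congrArg (fun v => -v) h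
            simpa [norm_neg, smul_neg] using this
          have : a = (-(‖a‖ / ‖c‖)) • c := by
            have := congrArg (fun v => (‖c‖)⁻¹ • v) h'
            simpa [smul_smul, smul_neg, inv_mul_cancel₀ hcn, div_eq_inv_mul,
              mul_comm] using this
          simpa [Matrix.cons_val_zero, Matrix.cons_val_one] using this.symm)
      simpa [inner_neg_left, norm_neg] using this
    have := abs_lt.mpr ⟨by linarith, h1⟩
    calc ⟪a, c⟫ ^ 2 = |⟪a, c⟫| ^ 2 := (sq_abs _).symm
      _ < (‖a‖ * ‖c‖) ^ 2 := by
          apply pow_lt_pow_left₀ this (abs_nonneg _)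
          norm_num
      _ = ‖a‖ ^ 2 * ‖c‖ ^ 2 := by ring
  have hDne : ‖a‖ ^ 2 * ‖c‖ ^ 2 - ⟪a, c⟫ ^ 2 ≠ 0 := by linarith
  have han : (‖a‖ : ℝ) ^ 2 ≠ 0 := by
    have := norm_ne_zero_iff.mpr ha
    positivity
  have hca : ⟪c, a⟫ = ⟪a, c⟫ := real_inner_comm a c
  have hcc : ⟪c, c⟫ = ‖c‖ ^ 2 := real_inner_self_eq_norm_sq c
  have hcw : ⟪c, w⟫ = bc + β * ‖c‖ ^ 2 := by
    simp [w, inner_add_right, inner_smul_right, hx, hcc]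
  have haw : ⟪a, w⟫ = ⟪a, x⟫ + β * ⟪a, c⟫ := by
    simp [w, inner_add_right, inner_smul_right]
  rw [inner_sub_right, inner_smul_right, hcw, haw, hca]
  have hβ : β * (‖a‖ ^ 2 * ‖c‖ ^ 2 - ⟪a, c⟫ ^ 2) = ⟪a, c⟫ * (⟪a, x⟫ - ba) :=
    div_mul_cancel₀ _ hDne
  set p := (⟪a, c⟫ : ℝ) with hp
  set q := (⟪a, x⟫ : ℝ) with hq
  set na := (‖a‖ : ℝ) ^ 2
  set nc := (‖c‖ : ℝ) ^ 2
  field_simp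
  nlinarith [hβ]
end

section
/- Let a, c ∈ ℝⁿ be nonzero and linearly independent, let b_a, b_c ∈ ℝ, x ∈ ℝⁿ with ⟨c, x⟩ = b_c. With β, w, x⁺ defined as in the inertial Kaczmarz update (β = ⟨a,c⟩(⟨a,x⟩−b_a)/(‖a‖²‖c‖²−⟨a,c⟩²), w = x + βc, x⁺ = w − ((⟨a,w⟩−b_a)/‖a‖²)a), then ⟨a, x⁺⟩ = b_a and ⟨c, x⁺⟩ = b_c simultaneously, i.e., x⁺ ∈ H_a ∩ H_c. -/
open RealInnerProductSpace

/-!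
Linear independence of `a` and `c` makes the Gram determinant `‖a‖²‖c‖² - ⟨a,c⟩²` positive
(strict Cauchy–Schwarz), so `β` is well defined. The final step is the orthogonal projection
onto `H_a`, which lands in `H_a` whatever `w` is; it moves `⟨c,·⟩` by `-⟨a,c⟩(⟨a,w⟩ - b_a)/‖a‖²`,
and `β` is exactly the extrapolation along `c` for which this shift cancels the gain `β‖c‖²`.
-/

variable {F : Type*} [NormedAddCommGroup F] [InnerProductSpace ℝ F]

theorem sq_inner_lt_of_linearIndependent {x y : F} (h : LinearIndependent ℝ ![x, y]) :
    ⟪x, y⟫ ^ 2 < ‖x‖ ^ 2 * ‖y‖ ^ 2 := by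
  have hx : x ≠ 0 := h.ne_zero 0
  have hy : y ≠ 0 := h.ne_zero 1
  have hlt : |⟪x, y⟫| < ‖x‖ * ‖y‖ := by
    refine (abs_real_inner_le_norm x y).lt_of_ne fun heq => ?_
    obtain ⟨r, -, rfl⟩ := (norm_inner_eq_norm_iff (𝕜 := ℝ) hx hy).1 heq
    exact (LinearIndependent.pair_iff' hx).1 h r rfl
  rw [← mul_pow]
  exact sq_lt_sq.2 (by rwa [abs_of_nonneg (by positivity : 0 ≤ ‖x‖ * ‖y‖)])

noncomputable def hyperplaneProj (a : F) (b : ℝ) (w : F) : F :=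
  w - ((⟪a, w⟫ - b) / ‖a‖ ^ 2) • a

theorem inner_hyperplaneProj (a c w : F) (b : ℝ) :
    ⟪c, hyperplaneProj a b w⟫ = ⟪c, w⟫ - (⟪a, w⟫ - b) / ‖a‖ ^ 2 * ⟪a, c⟫ := by
  rw [hyperplaneProj, inner_sub_right, real_inner_smul_right, real_inner_comm a c]

theorem inner_hyperplaneProj_self {a : F} (ha : a ≠ 0) (b : ℝ) (w : F) :
    ⟪a, hyperplaneProj a b w⟫ = b := by
  have : ‖a‖ ^ 2 ≠ 0 := pow_ne_zero 2 (norm_ne_zero_iff.2 ha)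
  rw [inner_hyperplaneProj, real_inner_self_eq_norm_sq, div_mul_cancel₀ _ this]
  ring

theorem inner_hyperplaneProj_add_smul {a c x : F} (ha : a ≠ 0) {b₁ b₂ β : ℝ}
    (hx : ⟪c, x⟫ = b₂)
    (hβ : β * (‖a‖ ^ 2 * ‖c‖ ^ 2 - ⟪a, c⟫ ^ 2) = ⟪a, c⟫ * (⟪a, x⟫ - b₁)) :
    ⟪c, hyperplaneProj a b₁ (x + β • c)⟫ = b₂ := by
  have : ‖a‖ ^ 2 ≠ 0 := pow_ne_zero 2 (norm_ne_zero_iff.2 ha)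
  rw [inner_hyperplaneProj, inner_add_right, inner_add_right, real_inner_smul_right,
    real_inner_smul_right, real_inner_self_eq_norm_sq, hx]
  field_simp
  linear_combination hβ

theorem stmt_3_general {n : ℕ} (a c : EuclideanSpace ℝ (Fin n))
    (hind : LinearIndependent ℝ ![a, c]) (ba bc : ℝ)
    (x : EuclideanSpace ℝ (Fin n)) (hx : ⟪c, x⟫ = bc) :
    let β : ℝ := ⟪a, c⟫ * (⟪a, x⟫ - ba) / (‖a‖ ^ 2 * ‖c‖ ^ 2 - ⟪a, c⟫ ^ 2)
    let w := x + β • c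
    let xp := w - ((⟪a, w⟫ - ba) / ‖a‖ ^ 2) • a
    ⟪a, xp⟫ = ba ∧ ⟪c, xp⟫ = bc := by
  intro β w xp
  have ha : a ≠ 0 := hind.ne_zero 0
  have hD : ‖a‖ ^ 2 * ‖c‖ ^ 2 - ⟪a, c⟫ ^ 2 ≠ 0 :=
    (sub_pos.2 (sq_inner_lt_of_linearIndependent hind)).ne'
  exact ⟨inner_hyperplaneProj_self ha ba w,
    inner_hyperplaneProj_add_smul ha hx (div_mul_cancel₀ _ hD)⟩

/-- The inertial Kaczmarz update lands on the intersection of the two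
hyperplanes `H_a = {⟨a,·⟩ = b_a}` and `H_c = {⟨c,·⟩ = b_c}`. -/
theorem stmt_3 {n : ℕ} (a c : EuclideanSpace ℝ (Fin n)) (ha : a ≠ 0) (hc : c ≠ 0)
    (hind : LinearIndependent ℝ ![a, c]) (ba bc : ℝ)
    (x : EuclideanSpace ℝ (Fin n)) (hx : ⟪c, x⟫ = bc) :
    let β : ℝ := ⟪a, c⟫ * (⟪a, x⟫ - ba) / (‖a‖ ^ 2 * ‖c‖ ^ 2 - ⟪a, c⟫ ^ 2)
    let w := x + β • c
    let xp := w - ((⟪a, w⟫ - ba) / ‖a‖ ^ 2) • a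
    ⟪a, xp⟫ = ba ∧ ⟪c, xp⟫ = bc :=
  stmt_3_general a c hind ba bc x hx
end

section
/- Let A ∈ ℝ^{m×n} with nonzero rows, b ∈ ℝᵐ, and x ∈ ℝⁿ. Suppose there is an index j ∈ [m] such that ⟨a_j, x⟩ = b_j (zero residual on row j). Define γ₁ = max_{i∈[m]} ∑_{k≠i} ‖a_k‖². Then max_{i∈[m]} |⟨aᵢ,x⟩−bᵢ|²/‖aᵢ‖² ≥ ‖Ax−b‖² / γ₁. -/
open RealInnerProductSpace

/-- If the residual vanishes on some row `j`, the maximal weighted residual is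
bounded below by `‖Ax−b‖² / γ₁`, where `γ₁ = max_i ∑_{k≠i} ‖a_k‖²`. -/
theorem stmt_5 {m n : ℕ} (hm : 2 ≤ m) (a : Fin m → EuclideanSpace ℝ (Fin n))
    (ha : ∀ i, a i ≠ 0) (b : Fin m → ℝ) (x : EuclideanSpace ℝ (Fin n))
    (j : Fin m) (hj : ⟪a j, x⟫ = b j) :
    Finset.univ.sup'
        (⟨⟨0, by omega⟩, Finset.mem_univ _⟩ : (Finset.univ : Finset (Fin m)).Nonempty)
        (fun i => (⟪a i, x⟫ - b i) ^ 2 / ‖a i‖ ^ 2)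
      ≥ (∑ i, (⟪a i, x⟫ - b i) ^ 2) /
        (Finset.univ.sup'
          (⟨⟨0, by omega⟩, Finset.mem_univ _⟩ : (Finset.univ : Finset (Fin m)).Nonempty)
          (fun i => ∑ k ∈ Finset.univ.erase i, ‖a k‖ ^ 2)) := by
  have ne : (Finset.univ : Finset (Fin m)).Nonempty := ⟨⟨0, by omega⟩, Finset.mem_univ _⟩
  set M := Finset.univ.sup' ne (fun i => (⟪a i, x⟫ - b i) ^ 2 / ‖a i‖ ^ 2) with hM
  set G := Finset.univ.sup' ne (fun i => ∑ k ∈ Finset.univ.erase i, ‖a k‖ ^ 2) with hG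
  have hnorm : ∀ i, (0:ℝ) < ‖a i‖ ^ 2 := fun i => by
    have := norm_pos_iff.mpr (ha i); positivity
  -- pick some k ≠ j
  haveI : Nontrivial (Fin m) := Fin.nontrivial_iff_two_le.mpr hm
  obtain ⟨k, hkj⟩ : ∃ k : Fin m, k ≠ j := exists_ne j
  have hGj : (∑ l ∈ Finset.univ.erase j, ‖a l‖ ^ 2) ≤ G :=
    Finset.le_sup' (fun i => ∑ k ∈ Finset.univ.erase i, ‖a k‖ ^ 2) (Finset.mem_univ j)
  have hsumpos : (0:ℝ) < ∑ l ∈ Finset.univ.erase j, ‖a l‖ ^ 2 := by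
    apply Finset.sum_pos' (fun l _ => le_of_lt (hnorm l))
    exact ⟨k, Finset.mem_erase.mpr ⟨hkj, Finset.mem_univ k⟩, hnorm k⟩
  have hGpos : (0:ℝ) < G := lt_of_lt_of_le hsumpos hGj
  have hM0 : (0:ℝ) ≤ M := by
    have : (⟪a j, x⟫ - b j) ^ 2 / ‖a j‖ ^ 2 ≤ M :=
      Finset.le_sup' (fun i => (⟪a i, x⟫ - b i) ^ 2 / ‖a i‖ ^ 2) (Finset.mem_univ j)
    rw [hj] at this
    simpa using this
  have hle : ∀ i, (⟪a i, x⟫ - b i) ^ 2 ≤ M * ‖a i‖ ^ 2 := by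
    intro i
    have h1 : (⟪a i, x⟫ - b i) ^ 2 / ‖a i‖ ^ 2 ≤ M :=
      Finset.le_sup' (fun i => (⟪a i, x⟫ - b i) ^ 2 / ‖a i‖ ^ 2) (Finset.mem_univ i)
    exact (div_le_iff₀ (hnorm i)).mp h1
  rw [ge_iff_le, div_le_iff₀ hGpos]
  have hsum : (∑ i, (⟪a i, x⟫ - b i) ^ 2)
      = ∑ i ∈ Finset.univ.erase j, (⟪a i, x⟫ - b i) ^ 2 := by
    rw [← Finset.sum_erase_add _ _ (Finset.mem_univ j), hj]
    simp
  calc (∑ i, (⟪a i, x⟫ - b i) ^ 2)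
      = ∑ i ∈ Finset.univ.erase j, (⟪a i, x⟫ - b i) ^ 2 := hsum
    _ ≤ ∑ i ∈ Finset.univ.erase j, M * ‖a i‖ ^ 2 :=
        Finset.sum_le_sum (fun i _ => hle i)
    _ = M * ∑ i ∈ Finset.univ.erase j, ‖a i‖ ^ 2 := by rw [Finset.mul_sum]
    _ ≤ M * G := mul_le_mul_of_nonneg_left hGj hM0
end

section
/- Let A ∈ ℝ^{m×n} with m ≥ 3 and nonzero rows, b ∈ ℝᵐ, and x ∈ ℝⁿ. Suppose there are two distinct indices j ≠ j' with ⟨a_j, x⟩ = b_j and ⟨a_{j'}, x⟩ = b_{j'}. Define γ₂ = max_{i≠j, i,j∈[m]} ∑_{k≠i,j} ‖a_k‖². Then max_{i∈[m]} |⟨aᵢ,x⟩−bᵢ|²/‖aᵢ‖² ≥ ‖Ax−b‖² / γ₂. -/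
open RealInnerProductSpace

/-- If the residual vanishes on two distinct rows `j ≠ j'`, the maximal weighted
residual is bounded below by `‖Ax−b‖² / γ₂`, where
`γ₂ = max_{i≠j} ∑_{k≠i,j} ‖a_k‖²`. -/
theorem stmt_6 {m n : ℕ} (hm : 3 ≤ m) (a : Fin m → EuclideanSpace ℝ (Fin n))
    (ha : ∀ i, a i ≠ 0) (b : Fin m → ℝ) (x : EuclideanSpace ℝ (Fin n))
    (j j' : Fin m) (hjj' : j ≠ j') (hj : ⟪a j, x⟫ = b j) (hj' : ⟪a j', x⟫ = b j') :
    Finset.univ.sup'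
        (⟨⟨0, by omega⟩, Finset.mem_univ _⟩ : (Finset.univ : Finset (Fin m)).Nonempty)
        (fun i => (⟪a i, x⟫ - b i) ^ 2 / ‖a i‖ ^ 2)
      ≥ (∑ i, (⟪a i, x⟫ - b i) ^ 2) /
        ((Finset.univ : Finset (Fin m)).offDiag.sup'
          (⟨(⟨0, by omega⟩, ⟨1, by omega⟩), by
            simp [Finset.mem_offDiag, Fin.ext_iff]⟩ :
            ((Finset.univ : Finset (Fin m)).offDiag).Nonempty)
          (fun p => ∑ k ∈ (Finset.univ.erase p.1).erase p.2, ‖a k‖ ^ 2)) := by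
  set r : Fin m → ℝ := fun i => (⟪a i, x⟫ - b i) ^ 2 with hr
  set M := Finset.univ.sup'
      (⟨⟨0, by omega⟩, Finset.mem_univ _⟩ : (Finset.univ : Finset (Fin m)).Nonempty)
      (fun i => (⟪a i, x⟫ - b i) ^ 2 / ‖a i‖ ^ 2) with hM
  set γ := ((Finset.univ : Finset (Fin m)).offDiag.sup'
      (⟨(⟨0, by omega⟩, ⟨1, by omega⟩), by
        simp [Finset.mem_offDiag, Fin.ext_iff]⟩ :
        ((Finset.univ : Finset (Fin m)).offDiag).Nonempty)
      (fun p => ∑ k ∈ (Finset.univ.erase p.1).erase p.2, ‖a k‖ ^ 2)) with hγ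
  have hnorm : ∀ i, (0:ℝ) < ‖a i‖ ^ 2 := fun i =>
    pow_pos (norm_pos_iff.mpr (ha i)) 2
  set S := (Finset.univ.erase j).erase j' with hS
  have hSne : S.Nonempty := by
    rw [← Finset.card_pos]
    have h1 : j ∈ (Finset.univ : Finset (Fin m)) := Finset.mem_univ _
    have h2 : j' ∈ Finset.univ.erase j := by
      simp [Finset.mem_erase, Ne.symm hjj']
    rw [hS, Finset.card_erase_of_mem h2, Finset.card_erase_of_mem h1]
    simp only [Finset.card_univ, Fintype.card_fin]
    omega
  have hjj'mem : (j, j') ∈ (Finset.univ : Finset (Fin m)).offDiag := by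
    simp [Finset.mem_offDiag, hjj']
  have hγge : (∑ k ∈ S, ‖a k‖ ^ 2) ≤ γ :=
    Finset.le_sup' (fun p : Fin m × Fin m => ∑ k ∈ (Finset.univ.erase p.1).erase p.2, ‖a k‖ ^ 2) hjj'mem
  have hγpos : 0 < γ := by
    refine lt_of_lt_of_le ?_ hγge
    obtain ⟨k, hk⟩ := hSne
    exact Finset.sum_pos' (fun i _ => le_of_lt (hnorm i)) ⟨k, hk, hnorm k⟩
  have hMnn : 0 ≤ M := by
    refine le_trans ?_ (Finset.le_sup' _ (Finset.mem_univ j))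
    positivity
  have hMi : ∀ i, r i ≤ M * ‖a i‖ ^ 2 := by
    intro i
    have := Finset.le_sup' (fun i => (⟪a i, x⟫ - b i) ^ 2 / ‖a i‖ ^ 2)
      (Finset.mem_univ i)
    rw [div_le_iff₀ (hnorm i)] at this
    exact this
  have hsum : (∑ i, r i) = ∑ k ∈ S, r k := by
    refine (Finset.sum_subset (Finset.subset_univ S) ?_).symm
    intro i _ hi
    have : i = j' ∨ i = j := by
      by_contra h
      push_neg at h
      exact hi (by simp [hS, Finset.mem_erase, h.1, h.2])
    rcases this with h | h <;> subst h <;> simp only [hr]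
    · rw [hj', sub_self, zero_pow two_ne_zero]
    · rw [hj, sub_self, zero_pow two_ne_zero]
  rw [ge_iff_le, div_le_iff₀ hγpos]
  calc (∑ i, r i) = ∑ k ∈ S, r k := hsum
    _ ≤ ∑ k ∈ S, M * ‖a k‖ ^ 2 := Finset.sum_le_sum fun k _ => hMi k
    _ = M * ∑ k ∈ S, ‖a k‖ ^ 2 := (Finset.mul_sum _ _ _).symm
    _ ≤ M * γ := mul_le_mul_of_nonneg_left hγge hMnn
end

section
/- Let a, c ∈ ℝⁿ be nonzero and linearly independent, b_a, b_c ∈ ℝ, and let x, x* ∈ ℝⁿ satisfy ⟨c, x⟩ = b_c, ⟨a, x*⟩ = b_a, ⟨c, x*⟩ = b_c. With β = ⟨a,c⟩(⟨a,x⟩−b_a)/(‖a‖²‖c‖²−⟨a,c⟩²), w = x + βc, and x⁺ = w − ((⟨a,w⟩−b_a)/‖a‖²)a, one has the exact error identity ‖x⁺ − x*‖² = ‖x − x*‖² − (1/(1 − δ_{ac}²)) · (⟨a,x⟩ − b_a)²/‖a‖², where δ_{ac} = ⟨a,c⟩/(‖a‖‖c‖). -/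
/-!
The step `w ↦ x⁺` is the orthogonal projection onto the hyperplane `⟨a, ·⟩ = b_a`, which
contains `x*`, so by Pythagoras it lowers the squared error by `(⟨a, w⟩ − b_a)² / ‖a‖²`.
Since `x` and `x*` both lie on the hyperplane `⟨c, ·⟩ = b_c`, the inertial move `x ↦ x + βc`
is orthogonal to `x − x*` and raises the squared error by `β²‖c‖²`. For the given `β` the net
change is then a rational identity in `‖a‖, ‖c‖, ⟨a, c⟩, ⟨a, x⟩ − b_a`, whose denominator
`‖a‖²‖c‖² − ⟨a, c⟩²` is nonzero by the strict Cauchy–Schwarz inequality for independent vectors.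
-/

open RealInnerProductSpace

section InnerProductSpace

variable {F : Type*} [NormedAddCommGroup F] [InnerProductSpace ℝ F]

theorem sq_real_inner_lt_of_linearIndependent {a c : F} (h : LinearIndependent ℝ ![a, c]) :
    ⟪a, c⟫ ^ 2 < ‖a‖ ^ 2 * ‖c‖ ^ 2 := by
  have ha : a ≠ 0 := by simpa using h.ne_zero 0
  have hc : c ≠ 0 := by simpa using h.ne_zero 1
  have hne : |⟪a, c⟫| ≠ ‖a‖ * ‖c‖ := by
    intro heq
    obtain ⟨r, -, rfl⟩ := (norm_inner_eq_norm_iff (𝕜 := ℝ) ha hc).mp (by rwa [Real.norm_eq_abs])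
    have := LinearIndependent.pair_iff.mp h r (-1) (by simp)
    norm_num at this
  have hlt : |⟪a, c⟫| < ‖a‖ * ‖c‖ := (abs_real_inner_le_norm a c).lt_of_ne hne
  rw [← mul_pow, ← sq_abs]
  exact pow_lt_pow_left₀ hlt (abs_nonneg _) two_ne_zero

theorem norm_hyperplane_projection_sub_sq (a w y : F) {b : ℝ} (hy : ⟪a, y⟫ = b) :
    ‖w - ((⟪a, w⟫ - b) / ‖a‖ ^ 2) • a - y‖ ^ 2 = ‖w - y‖ ^ 2 - (⟪a, w⟫ - b) ^ 2 / ‖a‖ ^ 2 := by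
  rcases eq_or_ne a 0 with rfl | ha
  · simp
  have hA : ‖a‖ ≠ 0 := norm_ne_zero_iff.mpr ha
  have hwy : ⟪w - y, a⟫ = ⟪a, w⟫ - b := by rw [real_inner_comm, inner_sub_right, hy]
  rw [sub_right_comm, norm_sub_sq_real, real_inner_smul_right, hwy, norm_smul, mul_pow,
    Real.norm_eq_abs, sq_abs]
  field_simp
  ring

theorem norm_add_smul_sq_of_inner_eq_zero {u c : F} (h : ⟪c, u⟫ = 0) (β : ℝ) :
    ‖u + β • c‖ ^ 2 = ‖u‖ ^ 2 + β ^ 2 * ‖c‖ ^ 2 := by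
  rw [norm_add_sq_real, real_inner_smul_right, real_inner_comm, h, norm_smul, mul_pow,
    Real.norm_eq_abs, sq_abs]
  ring

end InnerProductSpace

theorem inertial_kaczmarz_scalar_identity {N A C t r : ℝ} (hA : A ≠ 0) (hC : C ≠ 0)
    (hD : A ^ 2 * C ^ 2 - t ^ 2 ≠ 0) :
    N + (t * r / (A ^ 2 * C ^ 2 - t ^ 2)) ^ 2 * C ^ 2
        - (r + t * r / (A ^ 2 * C ^ 2 - t ^ 2) * t) ^ 2 / A ^ 2
      = N - 1 / (1 - (t / (A * C)) ^ 2) * (r ^ 2 / A ^ 2) := by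
  have hδ : 1 - (t / (A * C)) ^ 2 = (A ^ 2 * C ^ 2 - t ^ 2) / (A ^ 2 * C ^ 2) := by
    field_simp
  rw [hδ]
  field_simp
  ring

theorem stmt_9_general {n : ℕ} (a c : EuclideanSpace ℝ (Fin n))
    (hind : LinearIndependent ℝ ![a, c]) (ba bc : ℝ)
    (x xs : EuclideanSpace ℝ (Fin n))
    (hx : ⟪c, x⟫ = bc) (hxa : ⟪a, xs⟫ = ba) (hxc : ⟪c, xs⟫ = bc) :
    let β : ℝ := ⟪a, c⟫ * (⟪a, x⟫ - ba) / (‖a‖ ^ 2 * ‖c‖ ^ 2 - ⟪a, c⟫ ^ 2)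
    let w := x + β • c
    let xp := w - ((⟪a, w⟫ - ba) / ‖a‖ ^ 2) • a
    let δ : ℝ := ⟪a, c⟫ / (‖a‖ * ‖c‖)
    ‖xp - xs‖ ^ 2 = ‖x - xs‖ ^ 2 - (1 / (1 - δ ^ 2)) * ((⟪a, x⟫ - ba) ^ 2 / ‖a‖ ^ 2) := by
  intro β w xp δ
  have ha : a ≠ 0 := by simpa using hind.ne_zero 0
  have hc : c ≠ 0 := by simpa using hind.ne_zero 1
  have hD := sq_real_inner_lt_of_linearIndependent hind
  have hc_perp : ⟪c, x - xs⟫ = 0 := by rw [inner_sub_right, hx, hxc, sub_self]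
  have hw : w - xs = (x - xs) + β • c := by simp only [w]; abel
  have hwa : ⟪a, w⟫ - ba = (⟪a, x⟫ - ba) + β * ⟪a, c⟫ := by
    simp only [w, inner_add_right, real_inner_smul_right]; ring
  rw [norm_hyperplane_projection_sub_sq a w xs hxa, hw,
    norm_add_smul_sq_of_inner_eq_zero hc_perp, hwa]
  exact inertial_kaczmarz_scalar_identity (norm_ne_zero_iff.mpr ha) (norm_ne_zero_iff.mpr hc)
    (sub_pos.mpr hD).ne'

/-- Exact one-step error identity for the multi-step inertial Kaczmarz step:
`‖x⁺ − x*‖² = ‖x − x*‖² − (1/(1 − δ²)) (⟨a,x⟩ − b_a)²/‖a‖²`, where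
`δ = ⟨a,c⟩/(‖a‖‖c‖)`. -/
theorem stmt_9 {n : ℕ} (a c : EuclideanSpace ℝ (Fin n)) (ha : a ≠ 0) (hc : c ≠ 0)
    (hind : LinearIndependent ℝ ![a, c]) (ba bc : ℝ)
    (x xs : EuclideanSpace ℝ (Fin n))
    (hx : ⟪c, x⟫ = bc) (hxa : ⟪a, xs⟫ = ba) (hxc : ⟪c, xs⟫ = bc) :
    let β : ℝ := ⟪a, c⟫ * (⟪a, x⟫ - ba) / (‖a‖ ^ 2 * ‖c‖ ^ 2 - ⟪a, c⟫ ^ 2)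
    let w := x + β • c
    let xp := w - ((⟪a, w⟫ - ba) / ‖a‖ ^ 2) • a
    let δ : ℝ := ⟪a, c⟫ / (‖a‖ * ‖c‖)
    ‖xp - xs‖ ^ 2 = ‖x - xs‖ ^ 2 - (1 / (1 - δ ^ 2)) * ((⟪a, x⟫ - ba) ^ 2 / ‖a‖ ^ 2) :=
  stmt_9_general a c hind ba bc x xs hx hxa hxc
end

section
/- Let a, c ∈ ℝⁿ be nonzero linearly independent and b_a, b_c ∈ ℝ, x ∈ ℝⁿ with ⟨c, x⟩ = b_c. Define the oblique projection direction d = a − (⟨a,c⟩/‖c‖²) c and set x⁺_obl = x − ((⟨a,x⟩ − b_a)/⟨a,d⟩) d (assuming ⟨a,d⟩ ≠ 0). Define x⁺_in as the inertial Kaczmarz update: β = ⟨a,c⟩(⟨a,x⟩−b_a)/(‖a‖²‖c‖²−⟨a,c⟩²), w = x + βc, x⁺_in = w − ((⟨a,w⟩−b_a)/‖a‖²)a. Then x⁺_obl = x⁺_in. -/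
open RealInnerProductSpace

/-!
With `r = ⟪a, x⟫ - ba` and the Gram determinant `D = ‖a‖²‖c‖² - ⟪a, c⟫²`, one has
`⟪a, d⟫ = D / ‖c‖²`, and both updates expand to the same combination
`x - (r ‖c‖² / D) • a + (⟪a, c⟫ r / D) • c` of `x`, `a` and `c`.
-/

section

variable {E : Type*} [NormedAddCommGroup E] [InnerProductSpace ℝ E]

lemma inner_sub_div_norm_sq_smul {a c : E} (hc : c ≠ 0) :
    ⟪a, a - (⟪a, c⟫ / ‖c‖ ^ 2) • c⟫ = (‖a‖ ^ 2 * ‖c‖ ^ 2 - ⟪a, c⟫ ^ 2) / ‖c‖ ^ 2 := by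
  have hC : ‖c‖ ^ 2 ≠ 0 := by positivity
  rw [inner_sub_right, real_inner_smul_right, real_inner_self_eq_norm_sq, real_inner_comm c a]
  field_simp

lemma oblique_step_eq {a c : E} (x : E) (ba : ℝ) (hc : c ≠ 0)
    (hD : ‖a‖ ^ 2 * ‖c‖ ^ 2 - ⟪a, c⟫ ^ 2 ≠ 0) :
    x - ((⟪a, x⟫ - ba) / ⟪a, a - (⟪a, c⟫ / ‖c‖ ^ 2) • c⟫) • (a - (⟪a, c⟫ / ‖c‖ ^ 2) • c) =
      x - ((⟪a, x⟫ - ba) * ‖c‖ ^ 2 / (‖a‖ ^ 2 * ‖c‖ ^ 2 - ⟪a, c⟫ ^ 2)) • a +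
        (⟪a, c⟫ * (⟪a, x⟫ - ba) / (‖a‖ ^ 2 * ‖c‖ ^ 2 - ⟪a, c⟫ ^ 2)) • c := by
  have hC : ‖c‖ ^ 2 ≠ 0 := by positivity
  rw [inner_sub_div_norm_sq_smul hc]
  match_scalars <;> field_simp

lemma inertial_step_eq {a : E} (c x : E) (ba : ℝ) (ha : a ≠ 0)
    (hD : ‖a‖ ^ 2 * ‖c‖ ^ 2 - ⟪a, c⟫ ^ 2 ≠ 0) :
    let w := x + (⟪a, c⟫ * (⟪a, x⟫ - ba) / (‖a‖ ^ 2 * ‖c‖ ^ 2 - ⟪a, c⟫ ^ 2)) • c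
    w - ((⟪a, w⟫ - ba) / ‖a‖ ^ 2) • a =
      x - ((⟪a, x⟫ - ba) * ‖c‖ ^ 2 / (‖a‖ ^ 2 * ‖c‖ ^ 2 - ⟪a, c⟫ ^ 2)) • a +
        (⟪a, c⟫ * (⟪a, x⟫ - ba) / (‖a‖ ^ 2 * ‖c‖ ^ 2 - ⟪a, c⟫ ^ 2)) • c := by
  have hA : ‖a‖ ^ 2 ≠ 0 := by positivity
  simp only [inner_add_right, real_inner_smul_right]
  match_scalars <;> field_simp
  ring

end

theorem stmt_15_general {n : ℕ} (a c : EuclideanSpace ℝ (Fin n)) (ha : a ≠ 0) (hc : c ≠ 0)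
    (ba : ℝ)
    (x : EuclideanSpace ℝ (Fin n)) :
    let d := a - (⟪a, c⟫ / ‖c‖ ^ 2) • c
    let xobl := x - ((⟪a, x⟫ - ba) / ⟪a, d⟫) • d
    let β : ℝ := ⟪a, c⟫ * (⟪a, x⟫ - ba) / (‖a‖ ^ 2 * ‖c‖ ^ 2 - ⟪a, c⟫ ^ 2)
    let w := x + β • c
    let xin := w - ((⟪a, w⟫ - ba) / ‖a‖ ^ 2) • a
    ⟪a, d⟫ ≠ 0 → xobl = xin := by
  intro d xobl β w xin had
  have hD : ‖a‖ ^ 2 * ‖c‖ ^ 2 - ⟪a, c⟫ ^ 2 ≠ 0 := by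
    rw [inner_sub_div_norm_sq_smul hc] at had
    exact left_ne_zero_of_mul had
  exact (oblique_step_eq x ba hc hD).trans (inertial_step_eq c x ba ha hD).symm

/-- Equivalence of the oblique projection technique and the multi-step inertial
extrapolation approach: both produce the same next iterate. -/
theorem stmt_15 {n : ℕ} (a c : EuclideanSpace ℝ (Fin n)) (ha : a ≠ 0) (hc : c ≠ 0)
    (hind : LinearIndependent ℝ ![a, c]) (ba bc : ℝ)
    (x : EuclideanSpace ℝ (Fin n)) (hx : ⟪c, x⟫ = bc) :
    let d := a - (⟪a, c⟫ / ‖c‖ ^ 2) • c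
    let xobl := x - ((⟪a, x⟫ - ba) / ⟪a, d⟫) • d
    let β : ℝ := ⟪a, c⟫ * (⟪a, x⟫ - ba) / (‖a‖ ^ 2 * ‖c‖ ^ 2 - ⟪a, c⟫ ^ 2)
    let w := x + β • c
    let xin := w - ((⟪a, w⟫ - ba) / ‖a‖ ^ 2) • a
    ⟪a, d⟫ ≠ 0 → xobl = xin :=
  stmt_15_general a c ha hc ba x
end
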